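/- arXiv:1703.05976 — 2 statements merged into one kernel-verified Lean document; each statement's English description precedes it below -/
import Mathlib

section
/- For every α > -1, there exist z, ξ in the open unit disk such that (2+α)·(1 + (2+α)z̄ξ)/(1-z̄ξ)^{4+α} = 0. Equivalently, the point ζ = -1/(2+α) lies in the open unit disk and is a zero of ζ ↦ (1+(2+α)ζ)(1-ζ)^{-(4+α)}. -/
/-
The kernel vanishes exactly where its numerator factor `1 + (2 + α) ζ` does, i.e. at
`ζ = z̄ ξ = -1/(2 + α)`. Since `2 + α > 1` this point lies in the unit disk, and every point
of the disk is of the form `z̄ ξ` with `z, ξ` in the disk (take `ξ = √ζ`, `z = conj √ζ`).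
-/

open Metric Complex

theorem norm_neg_one_div_lt_one {w : ℂ} (hw : 1 < ‖w‖) : ‖-1 / w‖ < 1 := by
  rw [norm_div, norm_neg, norm_one]
  exact (div_lt_one (one_pos.trans hw)).2 hw

theorem norm_cpow_inv_two_lt_one {ζ : ℂ} (hζ : ‖ζ‖ < 1) : ‖ζ ^ (2⁻¹ : ℂ)‖ < 1 := by
  rw [show (2⁻¹ : ℂ) = ((2⁻¹ : ℝ) : ℂ) by push_cast; rfl, norm_cpow_real]
  exact Real.rpow_lt_one (norm_nonneg _) hζ (by norm_num)

theorem exists_conj_mul_eq_of_norm_lt_one {ζ : ℂ} (hζ : ‖ζ‖ < 1) :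
    ∃ z ξ : ℂ, ‖z‖ < 1 ∧ ‖ξ‖ < 1 ∧ starRingEnd ℂ z * ξ = ζ := by
  have hroot := norm_cpow_inv_two_lt_one hζ
  refine ⟨starRingEnd ℂ (ζ ^ (2⁻¹ : ℂ)), ζ ^ (2⁻¹ : ℂ), by rwa [norm_conj], hroot, ?_⟩
  rw [conj_conj, ← sq, cpow_ofNat_inv_pow]

/-- For every `α > -1` there exist `z, ξ` in the unit disk with
`(2+α)(1+(2+α)z̄ξ)/(1-z̄ξ)^{4+α} = 0`; equivalently `ζ = -1/(2+α)` lies in the unit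
disk and is a zero of `ζ ↦ (1+(2+α)ζ)(1-ζ)^{-(4+α)}`. -/
theorem stmt5 (α : ℝ) (hα : -1 < α) :
    (∃ z ξ : ℂ, ‖z‖ < 1 ∧ ‖ξ‖ < 1 ∧
      (2 + (α:ℂ)) * (1 + (2 + (α:ℂ)) * ((starRingEnd ℂ) z * ξ)) /
        (1 - (starRingEnd ℂ) z * ξ) ^ (4 + (α:ℂ)) = 0) ∧
    ‖(-1 / (2 + (α:ℂ)))‖ < 1 ∧
    (1 + (2 + (α:ℂ)) * (-1 / (2 + (α:ℂ)))) *
      (1 - (-1 / (2 + (α:ℂ)))) ^ (-(4 + (α:ℂ))) = 0 := by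
  have hnorm : 1 < ‖2 + (α:ℂ)‖ := by
    rw [show 2 + (α:ℂ) = ((2 + α : ℝ) : ℂ) by push_cast; rfl, norm_real, Real.norm_eq_abs,
      abs_of_pos (by linarith)]
    linarith
  have hzero : 1 + (2 + (α:ℂ)) * (-1 / (2 + (α:ℂ))) = 0 := by
    field_simp [norm_pos_iff.1 (one_pos.trans hnorm)]
    ring
  have hdisk := norm_neg_one_div_lt_one hnorm
  obtain ⟨z, ξ, hz, hξ, hzξ⟩ := exists_conj_mul_eq_of_norm_lt_one hdisk
  refine ⟨⟨z, ξ, hz, hξ, ?_⟩, hdisk, ?_⟩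
  · rw [hzξ, hzero, mul_zero, zero_div]
  · rw [hzero, zero_mul]
end

section
/- Define polynomials p_{α,n} recursively by p_{α,1}(ζ) = 4(2+α) + 4(2+α)²ζ and p_{α,m+1}(ζ) = 4p_{α,m}'(ζ)(1-ζ)² + 4(2+α+2m)p_{α,m}(ζ)(1-ζ) + 4ζ p_{α,m}''(ζ)(1-ζ)² + 8(2+α+2m)ζ p_{α,m}'(ζ)(1-ζ) + 4(2+α+2m)(3+α+2m)ζ p_{α,m}(ζ). Then for each n ≥ 1, p_{α,n} is a polynomial of degree exactly n (for α > -1). -/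
/-!
Write `θ = X · d/dX` for the Euler operator, which preserves degree and multiplies the coefficient
of `X^m` by `m`, and `L_β` for one step of the recursion with `β = 2 + α + 2m`. Then
`X · L_β q = (1 - X)² · 4θ²q + X(1 - X)(4βq + 8βθq) + 4β(β + 1)X²q`,
so if `deg q = m` the coefficient of `X^(m+2)` is `4(m² - 2βm - β + β(β + 1)) = 4(β - m)²` times
the leading coefficient of `q`, and all higher ones vanish. Hence `deg L_β q = m + 1` as soon as
`β ≠ m`, and here `β - m = 2 + α + m > 0`.
-/

open Polynomial

/-- The recursion defining the numerator polynomials `p_{α,n}` of the iterated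
associated-weight Bergman kernels. -/
def IsKernelNumeratorSeq (α : ℝ) (p : ℕ → Polynomial ℂ) : Prop :=
  p 1 = C (4 * (2 + (α:ℂ))) + C (4 * (2 + (α:ℂ)) ^ 2) * X ∧
  ∀ m : ℕ, 1 ≤ m → p (m + 1) =
    4 * derivative (p m) * (1 - X) ^ 2
    + C (4 * (2 + (α:ℂ) + 2 * (m:ℂ))) * p m * (1 - X)
    + 4 * X * derivative (derivative (p m)) * (1 - X) ^ 2
    + C (8 * (2 + (α:ℂ) + 2 * (m:ℂ))) * X * derivative (p m) * (1 - X)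
    + C (4 * (2 + (α:ℂ) + 2 * (m:ℂ)) * (3 + (α:ℂ) + 2 * (m:ℂ))) * X * p m

namespace Polynomial

variable {R : Type*} [CommRing R]

theorem coeff_X_mul_derivative (q : R[X]) (n : ℕ) :
    (X * derivative q).coeff n = n * q.coeff n := by
  cases n with
  | zero => simp
  | succ n => rw [coeff_X_mul, coeff_derivative, mul_comm]; push_cast; rfl

theorem natDegree_X_mul_derivative_le (q : R[X]) : (X * derivative q).natDegree ≤ q.natDegree :=
  natDegree_le_iff_coeff_eq_zero.mpr fun _ hN => by
    rw [coeff_X_mul_derivative, coeff_eq_zero_of_natDegree_lt hN, mul_zero]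

end Polynomial

section KernelStep

variable {R : Type*} [CommRing R]

/-- If `B = q / (1 - ζ)^β`, then `4B' + 4ζB'' = kernelStep β q / (1 - ζ)^(β + 2)`. -/
noncomputable def kernelStep (β : R) (q : R[X]) : R[X] :=
  4 * derivative q * (1 - X) ^ 2 + C (4 * β) * q * (1 - X)
    + 4 * X * derivative (derivative q) * (1 - X) ^ 2
    + C (8 * β) * X * derivative q * (1 - X) + C (4 * β * (β + 1)) * X * q

theorem X_mul_kernelStep (β : R) (q : R[X]) :
    X * kernelStep β q =
      (1 - X) ^ 2 * (C 4 * (X * derivative (X * derivative q)))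
        + (X - X ^ 2) * (C (4 * β) * q + C (8 * β) * (X * derivative q))
        + X ^ 2 * (C (4 * β * (β + 1)) * q) := by
  simp only [kernelStep, derivative_mul, derivative_X, map_mul, map_add, map_ofNat]
  ring

variable {β : R} {q : R[X]} {m : ℕ}

theorem natDegree_X_mul_kernelStep_le (hq : q.natDegree ≤ m) :
    (X * kernelStep β q).natDegree ≤ 2 + m := by
  have hθ := (natDegree_X_mul_derivative_le q).trans hq
  have hθθ := (natDegree_X_mul_derivative_le _).trans hθ
  rw [X_mul_kernelStep]
  refine natDegree_add_le_of_degree_le (natDegree_add_le_of_degree_le ?_ ?_) ?_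
  · exact natDegree_mul_le_of_le (by compute_degree!) ((natDegree_C_mul_le _ _).trans hθθ)
  · exact natDegree_mul_le_of_le (by compute_degree!) (natDegree_add_le_of_degree_le
      ((natDegree_C_mul_le _ _).trans hq) ((natDegree_C_mul_le _ _).trans hθ))
  · exact natDegree_mul_le_of_le (natDegree_X_pow_le 2) ((natDegree_C_mul_le _ _).trans hq)

theorem coeff_X_mul_kernelStep (hq : q.natDegree ≤ m) :
    (X * kernelStep β q).coeff (2 + m) = 4 * (β - m) ^ 2 * q.coeff m := by
  have hθ := (natDegree_X_mul_derivative_le q).trans hq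
  have hθθ := (natDegree_X_mul_derivative_le _).trans hθ
  rw [X_mul_kernelStep, coeff_add, coeff_add,
    coeff_mul_add_eq_of_natDegree_le (by compute_degree!) ((natDegree_C_mul_le _ _).trans hθθ),
    coeff_mul_add_eq_of_natDegree_le (by compute_degree!) (natDegree_add_le_of_degree_le
      ((natDegree_C_mul_le _ _).trans hq) ((natDegree_C_mul_le _ _).trans hθ)),
    coeff_mul_add_eq_of_natDegree_le (natDegree_X_pow_le 2) ((natDegree_C_mul_le _ _).trans hq)]
  have h₁ : ((1 - X) ^ 2 : R[X]).coeff 2 = 1 := by simp [sub_sq, coeff_one, coeff_X]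
  have h₂ : (X - X ^ 2 : R[X]).coeff 2 = -1 := by simp [coeff_X]
  simp only [h₁, h₂, coeff_X_pow_self, coeff_add, coeff_C_mul, coeff_X_mul_derivative]
  ring

theorem natDegree_kernelStep_le (hq : q.natDegree ≤ m) :
    (kernelStep β q).natDegree ≤ m + 1 :=
  natDegree_le_iff_coeff_eq_zero.mpr fun _ hN => by
    rw [← coeff_X_mul]
    exact coeff_eq_zero_of_natDegree_lt ((natDegree_X_mul_kernelStep_le hq).trans_lt (by omega))

theorem coeff_kernelStep_succ (hq : q.natDegree ≤ m) :
    (kernelStep β q).coeff (m + 1) = 4 * (β - m) ^ 2 * q.coeff m := by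
  rw [← coeff_X_mul, show m + 1 + 1 = 2 + m by omega, coeff_X_mul_kernelStep hq]

theorem degree_kernelStep [IsDomain R] [CharZero R] (hq : q.degree = m) (hβ : β ≠ m) :
    (kernelStep β q).degree = (m + 1 : ℕ) := by
  have hq' : q.natDegree = m := natDegree_eq_of_degree_eq_some hq
  have hq0 : q ≠ 0 := by rintro rfl; simp at hq
  refine degree_eq_of_le_of_coeff_ne_zero
    (degree_le_of_natDegree_le (natDegree_kernelStep_le hq'.le)) ?_
  rw [coeff_kernelStep_succ hq'.le, ← hq', coeff_natDegree]
  exact mul_ne_zero (mul_ne_zero (by norm_num) (pow_ne_zero 2 (sub_ne_zero.mpr (hq' ▸ hβ))))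
    (leadingCoeff_ne_zero.mpr hq0)

end KernelStep

/-- Each `p_{α,n}` is a polynomial of degree exactly `n` (for `α > -1`). -/
theorem stmt8 (α : ℝ) (hα : -1 < α) (p : ℕ → Polynomial ℂ)
    (hp : IsKernelNumeratorSeq α p) :
    ∀ n : ℕ, 1 ≤ n → (p n).degree = n := by
  obtain ⟨hp_one, hp_succ⟩ := hp
  intro n hn
  induction n, hn using Nat.le_induction with
  | base =>
    have h : (4 * (2 + α : ℂ) ^ 2) ≠ 0 := by
      have : (2 + α : ℂ) ≠ 0 := by exact_mod_cast (by linarith : 2 + α ≠ 0)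
      exact mul_ne_zero (by norm_num) (pow_ne_zero 2 this)
    rw [hp_one, add_comm]
    exact_mod_cast degree_linear h
  | succ m hm ih =>
    have hstep : p (m + 1) = kernelStep (2 + α + 2 * m : ℂ) (p m) := by
      rw [hp_succ m hm, kernelStep, show (3 + α + 2 * m : ℂ) = 2 + α + 2 * m + 1 by ring]
    have hβ : (2 + α + 2 * m : ℂ) ≠ m := by
      have h : ((2 + α + m : ℝ) : ℂ) ≠ 0 :=
        Complex.ofReal_ne_zero.mpr (by linarith [m.cast_nonneg (α := ℝ)])
      push_cast at h
      exact fun h' => h (by linear_combination h')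
    exact hstep ▸ degree_kernelStep ih hβ
end
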